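/- arXiv:1712.04838 — 5 statements merged into one kernel-verified Lean document; each statement's English description precedes it below -/
import Mathlib

section
/- Let u : J → X^α be a (classical) solution of u_t + Au = B(t)u on an open interval J, and let v : -J → X*,α be a solution of the adjoint equation v_t + A*v = B'(t)v where B'(t) = (B(-t)A^{-α})* A*,α. Then the pairing (u(t), v(-t)), where (x,y) := ⟨x, A*,α y⟩, is constant in t ∈ J. -/
open Filter


theorem bilin_deriv_aux {X F : Type*} [NormedAddCommGroup X] [NormedSpace ℝ X]
    [NormedAddCommGroup F] [NormedSpace ℝ F]
    (q : X →L[ℝ] F →L[ℝ] ℝ) {a : ℝ → X} {b : ℝ → F} {a' : X} {t : ℝ}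
    (ha : HasDerivAt a a' t) (ha0 : a t = 0) (hb : ContinuousAt b t) :
    HasDerivAt (fun s => q (a s) (b s)) (q a' (b t)) t := by
  rw [hasDerivAt_iff_tendsto_slope] at ha ⊢
  have hq : Continuous (fun p : X × F => q p.1 p.2) := q.continuous₂
  have h1 : Tendsto (fun s => (slope a t s, b s)) (nhdsWithin t {t}ᶜ) (nhds (a', b t)) :=
    ha.prodMk_nhds (hb.continuousWithinAt.tendsto)
  have h2 := (hq.continuousAt (x := (a', b t))).tendsto.comp h1
  refine h2.congr' ?_
  filter_upwards [self_mem_nhdsWithin] with s hs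
  have hst : s - t ≠ 0 := sub_ne_zero.mpr hs
  simp only [Function.comp, slope_def_module, ha0, sub_zero]
  simp [smul_eq_mul, slope_def_module, ha0]



/-- Let `u : J → X^α` be a classical solution of `u_t + Au = B(t)u` on an
open interval `J`, and `v : -J → X*^α` a solution of the adjoint equation
`v_t + A*v = B'(t)v`, where `B'(t) = (B(-t)A^{-α})* A*^α`.  Then the pairing
`(u(t), v(-t))`, where `(x,y) := ⟨x, A*^α y⟩ = ⟨A^α x, y⟩`, is constant in `t ∈ J`.

Model: `Eα` is `X^α` with continuous inclusion `ι : Eα →L X`, `Fα` is `X*^α` with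
continuous inclusion `ιs : Fα →L Fs` into `Fs = X*`; `q x y = ⟨x, A*^α y⟩` and
`r x y = ⟨A^α x, y⟩` are the two continuous bilinear pairings, agreeing via `hqr`.
`Au t` (resp. `A'v t`) denotes the value `A (u t)` (resp. `A* (v t)`); the operators
`A, A*` being unbounded, only these values along the solutions enter the statement.
The adjointness relations `⟨A u, A*^α v⟩ = ⟨A^α u, A* v⟩` and
`⟨B(t) u, A*^α v⟩ = ⟨A^α u, B'(-t) v⟩` are the hypotheses `hAadj`, `hBadj`. -/
theorem stmt3 {X Eα Fα Fs : Type*}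
    [NormedAddCommGroup X] [NormedSpace ℝ X]
    [NormedAddCommGroup Eα] [NormedSpace ℝ Eα]
    [NormedAddCommGroup Fα] [NormedSpace ℝ Fα]
    [NormedAddCommGroup Fs] [NormedSpace ℝ Fs]
    (ι : Eα →L[ℝ] X) (ιs : Fα →L[ℝ] Fs)
    (q : X →L[ℝ] Fα →L[ℝ] ℝ) (r : Eα →L[ℝ] Fs →L[ℝ] ℝ)
    (hqr : ∀ (x : Eα) (y : Fα), q (ι x) y = r x (ιs y))
    (J : Set ℝ) (hJopen : IsOpen J) (hJconn : J.OrdConnected)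
    (B : ℝ → Eα →L[ℝ] X) (B' : ℝ → Fα →L[ℝ] Fs)
    (u : ℝ → Eα) (Au : ℝ → X) (v : ℝ → Fα) (A'v : ℝ → Fs)
    (huc : ContinuousOn u J) (hvc : ContinuousOn v {t | -t ∈ J})
    -- `u` solves `u_t + Au = B(t)u` on `J` (derivative taken in `X`)
    (hu : ∀ t ∈ J, HasDerivAt (fun s => ι (u s)) (B t (u t) - Au t) t)
    -- `v` solves `v_t + A*v = B'(t)v` on `-J` (derivative taken in `X*`)
    (hv : ∀ t : ℝ, -t ∈ J → HasDerivAt (fun s => ιs (v s)) (B' t (v t) - A'v t) t)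
    -- adjointness: `⟨A u(t), A*^α v(s)⟩ = ⟨A^α u(t), A* v(s)⟩`
    (hAadj : ∀ t ∈ J, q (Au t) (v (-t)) = r (u t) (A'v (-t)))
    -- adjointness: `⟨B(t) u(t), A*^α v(-t)⟩ = ⟨A^α u(t), B'(-t) v(-t)⟩`
    (hBadj : ∀ t ∈ J, q (B t (u t)) (v (-t)) = r (u t) (B' (-t) (v (-t)))) :
    ∀ t ∈ J, ∀ t' ∈ J, q (ι (u t)) (v (-t)) = q (ι (u t')) (v (-t')) := by
  -- the pairing as a function of time
  set f : ℝ → ℝ := fun s => q (ι (u s)) (v (-s)) with hf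
  -- f has zero derivative on J
  have hderiv : ∀ t ∈ J, HasDerivAt f 0 t := by
    intro t ht
    have hbcont : ContinuousAt (fun s => v (-s)) t := by
      have hopen : IsOpen {s : ℝ | -s ∈ J} := hJopen.preimage continuous_neg
      exact (hvc.continuousAt (hopen.mem_nhds (by simpa using ht))).comp
        (continuous_neg.continuousAt)
    -- first summand
    have ha : HasDerivAt (fun s => ι (u s) - ι (u t)) (B t (u t) - Au t) t := by
      simpa using (hu t ht).sub_const (ι (u t))
    have hD1 : HasDerivAt (fun s => q (ι (u s) - ι (u t)) (v (-s)))
        (q (B t (u t) - Au t) (v (-t))) t :=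
      bilin_deriv_aux q ha (by simp) hbcont
    -- second summand
    have hw : HasDerivAt (fun s => ιs (v s)) (B' (-t) (v (-t)) - A'v (-t)) (-t) :=
      hv (-t) (by simpa using ht)
    have hneg : HasDerivAt (fun s : ℝ => -s) (-1 : ℝ) t := by
      exact (hasDerivAt_id t).neg
    have hw2 : HasDerivAt (fun s => ιs (v (-s)))
        ((-1 : ℝ) • (B' (-t) (v (-t)) - A'v (-t))) t := hw.scomp t hneg
    have hD2 : HasDerivAt (fun s => r (u t) (ιs (v (-s))))
        (r (u t) ((-1 : ℝ) • (B' (-t) (v (-t)) - A'v (-t)))) t :=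
      ((r (u t)).hasFDerivAt.comp_hasDerivAt t hw2)
    have hsum := hD1.add hD2
    have hfun : (fun s => q (ι (u s) - ι (u t)) (v (-s)) + r (u t) (ιs (v (-s)))) = f := by
      funext s
      simp [hf, map_sub, hqr]
    rw [show ((fun s => q (ι (u s) - ι (u t)) (v (-s))) + fun s => r (u t) (ιs (v (-s)))) = f from hfun] at hsum
    have hval : q (B t (u t) - Au t) (v (-t))
        + r (u t) ((-1 : ℝ) • (B' (-t) (v (-t)) - A'v (-t))) = 0 := by
      simp only [map_sub, map_smul, map_neg, ContinuousLinearMap.sub_apply,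
        ContinuousLinearMap.smul_apply, smul_eq_mul]
      have h1 := hBadj t ht
      have h2 := hAadj t ht
      ring_nf
      linarith [h1, h2]
    rwa [hval] at hsum
  -- hence f is constant on J
  have key : ∀ t ∈ J, ∀ t' ∈ J, t ≤ t' → f t' = f t := by
    intro t ht t' ht' htt'
    have hsub : Set.Icc t t' ⊆ J := hJconn.out ht ht'
    have hcont : ContinuousOn f (Set.Icc t t') := fun s hs =>
      ((hderiv s (hsub hs)).continuousAt).continuousWithinAt
    have hz : ∀ s ∈ Set.Ico t t', HasDerivWithinAt f 0 (Set.Ici s) s := fun s hs =>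
      (hderiv s (hsub (Set.Ico_subset_Icc_self hs))).hasDerivWithinAt
    exact constant_of_has_deriv_right_zero hcont hz t' (Set.right_mem_Icc.mpr htt')
  intro t ht t' ht'
  rcases le_total t t' with h | h
  · exact (key t ht t' ht' h).symm
  · exact key t' ht' t ht h
end

section
/- Let A be a positive sectorial operator with compact resolvent on a Banach space X, and let X₁ ⊂ D(A) be a finite-dimensional subspace. Then there exist a closed subspace X₂ ⊂ X and a bounded linear operator B' ∈ L(X, X) such that X = X₁ ⊕ X₂, (A − B')x = 0 for all x ∈ X₁, and (A − B')x ∈ X₂ for all x ∈ X₂ ∩ D(A). -/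
/-!
Fix one resolvent `R = (A + μ)⁻¹`. Since `R` is injective and `X₁` is
finite-dimensional, `R|_{X₁}` has a continuous left inverse `Q : X → X₁` (Hahn–Banach), so
`P = Q ∘ R` is a bounded projection onto `X₁` and `X₂ = ker P` is a closed complement.
For `d ∈ X₂ ∩ D(A)` the resolvent identity `R (A d) = d - μ R d` gives `P (A d) = Q d`, so
`B' = A ∘ P + Q ∘ (1 - P)` equals `A` on `X₁` and makes `(A - B') d = A d - Q d ∈ ker P`.
-/

open Function

theorem ContinuousLinearMap.HasLeftInverse.of_injective_of_finiteDimensional_domain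
    {𝕜 E F : Type*} [RCLike 𝕜] [NormedAddCommGroup E] [NormedSpace 𝕜 E] [FiniteDimensional 𝕜 E]
    [NormedAddCommGroup F] [NormedSpace 𝕜 F] {f : E →L[𝕜] F} (hf : Injective f) :
    f.HasLeftInverse := by
  let g₀ : f.range →L[𝕜] E :=
    LinearMap.toContinuousLinearMap (LinearEquiv.ofInjective f.toLinearMap hf).symm.toLinearMap
  obtain ⟨g, hg⟩ := g₀.exist_extension_of_finiteDimensional_range
  refine ⟨g, fun x => ?_⟩
  have hg₀ : g₀ ⟨f x, x, rfl⟩ = x := (LinearEquiv.ofInjective f.toLinearMap hf).symm_apply_apply x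
  calc g (f x) = g₀ ⟨f x, x, rfl⟩ := by rw [hg]; rfl
    _ = x := hg₀

theorem resolvent_injective {𝕜 X : Type*} [Semiring 𝕜] [AddCommMonoid X] [Module 𝕜 X]
    {D : Submodule 𝕜 X} (A : D →ₗ[𝕜] X) {R : X → X} {μ : 𝕜}
    (hR : ∀ y : X, ∃ d : D, (d : X) = R y ∧ A d + μ • (d : X) = y) : Injective R := by
  intro y z hyz
  obtain ⟨d, hdy, rfl⟩ := hR y
  obtain ⟨e, hez, rfl⟩ := hR z
  obtain rfl : d = e := Subtype.ext (by rw [hdy, hez, hyz])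
  rfl

theorem exists_isCompl_and_perturbation_of_resolvent {𝕜 X : Type*} [RCLike 𝕜]
    [NormedAddCommGroup X] [NormedSpace 𝕜 X] {D : Submodule 𝕜 X}
    (A : D →ₗ[𝕜] X) {R : X →L[𝕜] X} (hR : Injective R) {μ : 𝕜}
    (hRA : ∀ d : D, R (A d + μ • (d : X)) = d) (X₁ : Submodule 𝕜 X) (hX₁D : X₁ ≤ D)
    [FiniteDimensional 𝕜 X₁] :
    ∃ (X₂ : Submodule 𝕜 X) (B' : X →L[𝕜] X),
      IsClosed (X₂ : Set X) ∧ IsCompl X₁ X₂ ∧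
      (∀ d : D, (d : X) ∈ X₁ → A d - B' (d : X) = 0) ∧
      (∀ d : D, (d : X) ∈ X₂ → A d - B' (d : X) ∈ X₂) := by
  obtain ⟨Q, hQ⟩ := ContinuousLinearMap.HasLeftInverse.of_injective_of_finiteDimensional_domain
    (f := R ∘L X₁.subtypeL) (hR.comp Subtype.val_injective)
  set P : X →L[𝕜] X₁ := Q ∘L R
  have hP : ∀ x : X₁, P x = x := hQ
  let A₁ : X₁ →L[𝕜] X := LinearMap.toContinuousLinearMap (A ∘ₗ Submodule.inclusion hX₁D)
  let B' : X →L[𝕜] X := A₁ ∘L P + X₁.subtypeL ∘L Q ∘L (1 - X₁.subtypeL ∘L P)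
  refine ⟨LinearMap.ker (P : X →ₗ[𝕜] X₁), B', P.isClosed_ker, LinearMap.isCompl_of_proj hP,
    fun d hd => ?_, fun d hd => ?_⟩
  · have hPd : P d = ⟨d, hd⟩ := hP ⟨d, hd⟩
    have hd' : Submodule.inclusion hX₁D ⟨d, hd⟩ = d := rfl
    simp [B', A₁, hPd, hd']
  · have hPd : P d = 0 := hd
    have hRAd : R (A d) = d - μ • R d := eq_sub_of_add_eq (by simpa using hRA d)
    have hPAd : P (A d) = Q d := by
      change Q (R (A d)) = Q d
      rw [hRAd, map_sub, map_smul, ← ContinuousLinearMap.comp_apply, hPd, smul_zero, sub_zero]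
    show P (A d - B' d) = 0
    simp [B', hPd, hPAd, hP]

theorem stmt6_general {X : Type*} [NormedAddCommGroup X] [NormedSpace ℝ X]
    (D : Submodule ℝ X) (A : D →ₗ[ℝ] X)
    (hres : ∃ μ₀ M : ℝ, 0 < μ₀ ∧ 0 < M ∧ ∀ μ : ℝ, μ₀ ≤ μ →
      ∃ R : X →L[ℝ] X, IsCompactOperator R ∧ ‖R‖ ≤ M / μ ∧
        (∀ d : D, R (A d + μ • (d : X)) = (d : X)) ∧
        (∀ y : X, ∃ d : D, (d : X) = R y ∧ A d + μ • (d : X) = y))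
    (X₁ : Submodule ℝ X) (hX₁D : X₁ ≤ D) [FiniteDimensional ℝ X₁] :
    ∃ (X₂ : Submodule ℝ X) (B' : X →L[ℝ] X),
      IsClosed (X₂ : Set X) ∧ IsCompl X₁ X₂ ∧
      (∀ d : D, (d : X) ∈ X₁ → A d - B' (d : X) = 0) ∧
      (∀ d : D, (d : X) ∈ X₂ → A d - B' (d : X) ∈ X₂) := by
  obtain ⟨μ₀, _, -, -, hresolvent⟩ := hres
  obtain ⟨R, -, -, hRA, hRsurj⟩ := hresolvent μ₀ le_rfl
  exact exists_isCompl_and_perturbation_of_resolvent A (resolvent_injective A hRsurj) hRA X₁ hX₁D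

/-- Let `A` be a positive sectorial operator with compact resolvent on a
Banach space `X`, with domain `D = D(A)`, and let `X₁ ⊂ D(A)` be a finite-dimensional
subspace.  Then there exist a closed subspace `X₂ ⊂ X` and a bounded linear operator
`B' ∈ L(X,X)` such that `X = X₁ ⊕ X₂`, `(A − B')x = 0` for all `x ∈ X₁`, and
`(A − B')x ∈ X₂` for all `x ∈ X₂ ∩ D(A)`.

The sectoriality and compactness of the resolvent are encoded through the hypothesis
`hres`: for all sufficiently large `μ > 0` the resolvent `R μ = (A + μ I)^{-1}` exists as
a compact bounded operator with `‖R μ‖ ≤ M/μ`. -/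
theorem stmt6 {X : Type*} [NormedAddCommGroup X] [NormedSpace ℝ X] [CompleteSpace X]
    (D : Submodule ℝ X) (A : D →ₗ[ℝ] X)
    (hres : ∃ μ₀ M : ℝ, 0 < μ₀ ∧ 0 < M ∧ ∀ μ : ℝ, μ₀ ≤ μ →
      ∃ R : X →L[ℝ] X, IsCompactOperator R ∧ ‖R‖ ≤ M / μ ∧
        (∀ d : D, R (A d + μ • (d : X)) = (d : X)) ∧
        (∀ y : X, ∃ d : D, (d : X) = R y ∧ A d + μ • (d : X) = y))
    (X₁ : Submodule ℝ X) (hX₁D : X₁ ≤ D) [FiniteDimensional ℝ X₁] :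
    ∃ (X₂ : Submodule ℝ X) (B' : X →L[ℝ] X),
      IsClosed (X₂ : Set X) ∧ IsCompl X₁ X₂ ∧
      (∀ d : D, (d : X) ∈ X₁ → A d - B' (d : X) = 0) ∧
      (∀ d : D, (d : X) ∈ X₂ → A d - B' (d : X) ∈ X₂) :=
  stmt6_general D A hres X₁ hX₁D
end

section
/- Let f : ℝ × X^α → X be such that f(t,·) is C^∞ for each t, each derivative D^k_x f is bounded on sets ℝ × B_η(0) by a constant C(k,η), with t ↦ D^k_x f(t,·) uniformly Hölder continuous with exponent δ on such sets. Then the Nemitskii operator f̂ : C^{0,δ}_B(ℝ, X^α) → C^{0,δ}_B(ℝ, X), f̂(u)(t) := f(t, u(t)), is continuously Fréchet differentiable with derivative (Df̂(u)v)(t) = D_x f(t, u(t)) v(t), satisfying the local Lipschitz estimate ‖Df̂(u+u') − Df̂(u)‖ ≤ C(M)‖u'‖ whenever ‖u‖, ‖u+u'‖ ≤ M. -/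
/-- `u : ℝ → Y` is bounded by `C` and `δ`-Hölder with constant `C`; this expresses
`‖u‖_{C^{0,δ}_B(ℝ,Y)} ≤ C` (up to the usual equivalence of the two-term norm). -/
def HolderBddBy {Y : Type*} [NormedAddCommGroup Y] (δ : ℝ) (u : ℝ → Y) (C : ℝ) : Prop :=
  (∀ t : ℝ, ‖u t‖ ≤ C) ∧ ∀ s t : ℝ, ‖u s - u t‖ ≤ C * |s - t| ^ δ

noncomputable instance instNACGclm2 {E X : Type*} [NormedAddCommGroup E] [NormedSpace ℝ E]
  [NormedAddCommGroup X] [NormedSpace ℝ X] : NormedAddCommGroup (E →L[ℝ] E →L[ℝ] X) :=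
  ContinuousLinearMap.toNormedAddCommGroup
noncomputable instance instNSclm2 {E X : Type*} [NormedAddCommGroup E] [NormedSpace ℝ E]
  [NormedAddCommGroup X] [NormedSpace ℝ X] : NormedSpace ℝ (E →L[ℝ] E →L[ℝ] X) :=
  ContinuousLinearMap.toNormedSpace

section helpers
variable {E X : Type*} [NormedAddCommGroup E] [NormedSpace ℝ E]
  [NormedAddCommGroup X] [NormedSpace ℝ X]

lemma seg_norm_le' {p q x z : E} (hx : x ∈ segment ℝ p q) :
    ‖x - z‖ ≤ max ‖p - z‖ ‖q - z‖ := by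
  obtain ⟨a, b, ha, hb, hab, rfl⟩ := hx
  have h1 : a • p + b • q - z = a • (p - z) + b • (q - z) := by
    rw [smul_sub, smul_sub]
    rw [show a • p - a • z + (b • q - b • z) = a • p + b • q - (a • z + b • z) by abel,
      ← add_smul, hab, one_smul]
  rw [h1]
  calc ‖a • (p - z) + b • (q - z)‖ ≤ a * ‖p - z‖ + b * ‖q - z‖ := by
        refine (norm_add_le _ _).trans ?_
        rw [norm_smul, norm_smul, Real.norm_of_nonneg ha, Real.norm_of_nonneg hb]
    _ ≤ a * max ‖p - z‖ ‖q - z‖ + b * max ‖p - z‖ ‖q - z‖ := by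
        gcongr <;> [exact le_max_left _ _; exact le_max_right _ _]
    _ = max ‖p - z‖ ‖q - z‖ := by rw [← add_mul, hab, one_mul]

lemma seg_norm_le₀ {p q x : E} (hx : x ∈ segment ℝ p q) :
    ‖x‖ ≤ max ‖p‖ ‖q‖ := by
  have := seg_norm_le' (z := 0) hx
  simpa using this

lemma mvt_seg {F : Type*} [NormedAddCommGroup F] [NormedSpace ℝ F]
    {g : E → F} {g' : E → E →L[ℝ] F} {C : ℝ} {p q : E}
    (h : ∀ x ∈ segment ℝ p q, HasFDerivAt g (g' x) x)
    (hb : ∀ x ∈ segment ℝ p q, ‖g' x‖ ≤ C) :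
    ‖g q - g p‖ ≤ C * ‖q - p‖ :=
  Convex.norm_image_sub_le_of_norm_hasFDerivWithin_le
    (fun x hx => (h x hx).hasFDerivWithinAt) hb (convex_segment p q)
    (left_mem_segment ℝ p q) (right_mem_segment ℝ p q)

lemma norm_fd2 (g : E → X) (x : E) :
    ‖fderiv ℝ (fderiv ℝ g) x‖ = ‖iteratedFDeriv ℝ 2 g x‖ := by
  rw [← norm_iteratedFDeriv_zero (𝕜 := ℝ) (f := fderiv ℝ (fderiv ℝ g)) (x := x),
    norm_iteratedFDeriv_fderiv, norm_iteratedFDeriv_fderiv]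

lemma norm_fd3 (g : E → X) (x : E) :
    ‖fderiv ℝ (fderiv ℝ (fderiv ℝ g)) x‖ = ‖iteratedFDeriv ℝ 3 g x‖ := by
  rw [← norm_iteratedFDeriv_zero (𝕜 := ℝ) (f := fderiv ℝ (fderiv ℝ (fderiv ℝ g))) (x := x),
    norm_iteratedFDeriv_fderiv, norm_iteratedFDeriv_fderiv, norm_iteratedFDeriv_fderiv]

lemma norm_fd2_sub_le (g₁ g₂ : E → X) (x : E) :
    ‖fderiv ℝ (fderiv ℝ g₁) x - fderiv ℝ (fderiv ℝ g₂) x‖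
      ≤ ‖iteratedFDeriv ℝ 2 g₁ x - iteratedFDeriv ℝ 2 g₂ x‖ := by
  refine ContinuousLinearMap.opNorm_le_bound _ (norm_nonneg _) fun a => ?_
  refine ContinuousLinearMap.opNorm_le_bound _ (by positivity) fun b => ?_
  have h : (fderiv ℝ (fderiv ℝ g₁) x - fderiv ℝ (fderiv ℝ g₂) x) a b
      = (iteratedFDeriv ℝ 2 g₁ x - iteratedFDeriv ℝ 2 g₂ x) ![a, b] := by
    simp [iteratedFDeriv_two_apply]
  rw [h]
  calc ‖(iteratedFDeriv ℝ 2 g₁ x - iteratedFDeriv ℝ 2 g₂ x) ![a, b]‖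
      ≤ ‖iteratedFDeriv ℝ 2 g₁ x - iteratedFDeriv ℝ 2 g₂ x‖ * ∏ i, ‖![a, b] i‖ :=
        ContinuousMultilinearMap.le_opNorm _ _
    _ = ‖iteratedFDeriv ℝ 2 g₁ x - iteratedFDeriv ℝ 2 g₂ x‖ * ‖a‖ * ‖b‖ := by
        simp [Fin.prod_univ_two, mul_assoc]

end helpers

/-- Let `f : ℝ × X^α → X` be such that `f(t,·)` is `C^∞` for each `t`,
each derivative `D^k_x f` is bounded on sets `ℝ × B_η(0)` by a constant `C(k,η)`, and
`t ↦ D^k_x f(t,·)` is uniformly `δ`-Hölder on such sets.  Then the Nemitskii operator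
`f̂ : C^{0,δ}_B(ℝ,X^α) → C^{0,δ}_B(ℝ,X)`, `f̂(u)(t) = f(t,u(t))`, is continuously Fréchet
differentiable with derivative `(Df̂(u)v)(t) = D_x f(t,u(t)) v(t)`: the conclusion states
(1) the local Lipschitz estimate `‖Df̂(u+u') − Df̂(u)‖ ≤ K(M) ‖u'‖` in the Hölder-norm
sense, for `‖u‖, ‖u+u'‖ ≤ M`, and (2) the quadratic remainder estimate
`‖f̂(u+u') − f̂(u) − Df̂(u)u'‖ ≤ K(M) ‖u'‖²`, which together express continuous Fréchet
differentiability between the Hölder spaces. -/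
theorem stmt12 {E X : Type*}
    [NormedAddCommGroup E] [NormedSpace ℝ E]
    [NormedAddCommGroup X] [NormedSpace ℝ X]
    (δ : ℝ) (hδ0 : 0 < δ) (hδ1 : δ ≤ 1)
    (f : ℝ → E → X) (Df : ℝ → E → (E →L[ℝ] X))
    -- `f(t,·)` is smooth with derivative `D_x f`
    (hsmooth : ∀ t, ContDiff ℝ (⊤ : ℕ∞) (f t))
    (hDf : ∀ t x, HasFDerivAt (f t) (Df t x) x)
    -- uniform bounds for all derivatives on sets `ℝ × B_η(0)`
    (hbdd : ∀ (k : ℕ) (η : ℝ), 0 < η → ∃ C : ℝ, ∀ (t : ℝ) (x : E), ‖x‖ ≤ η →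
      ‖iteratedFDeriv ℝ k (f t) x‖ ≤ C)
    -- uniform `δ`-Hölder continuity in `t` of all derivatives on such sets
    (hHol : ∀ (k : ℕ) (η : ℝ), 0 < η → ∃ C : ℝ, ∀ (s t : ℝ) (x : E), ‖x‖ ≤ η →
      ‖iteratedFDeriv ℝ k (f s) x - iteratedFDeriv ℝ k (f t) x‖ ≤ C * |s - t| ^ δ) :
    ∀ M : ℝ, 0 < M → ∃ K : ℝ, 0 < K ∧
      -- (1) Lipschitz estimate for the derivative of the Nemitskii operator
      (∀ (u u' v : ℝ → E) (c c' : ℝ),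
        HolderBddBy δ u M → HolderBddBy δ (u + u') M →
        HolderBddBy δ u' c' → HolderBddBy δ v c →
        HolderBddBy δ (fun t => Df t ((u + u') t) (v t) - Df t (u t) (v t))
          (K * c' * c)) ∧
      -- (2) quadratic remainder estimate: Fréchet differentiability with the stated derivative
      (∀ (u u' : ℝ → E) (c' : ℝ),
        HolderBddBy δ u M → HolderBddBy δ (u + u') M → HolderBddBy δ u' c' →
        HolderBddBy δ (fun t => f t ((u + u') t) - f t (u t) - Df t (u t) (u' t))
          (K * c' ^ 2)) := by
  have hDfe : ∀ t, Df t = fderiv ℝ (f t) := fun t => funext fun x => ((hDf t x).fderiv).symm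
  intro M hM
  have h3M : (0:ℝ) < 3 * M := by linarith
  obtain ⟨C₂', hC₂'⟩ := hbdd 2 (3*M) h3M
  obtain ⟨C₃', hC₃'⟩ := hbdd 3 (3*M) h3M
  obtain ⟨CH', hCH'⟩ := hHol 2 (3*M) h3M
  set C₂ := max C₂' 0 with hC₂def
  set C₃ := max C₃' 0 with hC₃def
  set CH := max CH' 0 with hCHdef
  have hC₂0 : 0 ≤ C₂ := le_max_right _ _
  have hC₃0 : 0 ≤ C₃ := le_max_right _ _
  have hCH0 : 0 ≤ CH := le_max_right _ _
  have hCM0 : 0 ≤ C₃ * M := mul_nonneg hC₃0 hM.le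
  -- differentiability facts
  have hdiff1 : ∀ t, Differentiable ℝ (fderiv ℝ (f t)) :=
    fun t => ((hsmooth t).fderiv_right (m := (⊤ : ℕ∞)) (by simp)).differentiable (by simp)
  have hdiff2 : ∀ t, Differentiable ℝ (fderiv ℝ (fderiv ℝ (f t))) :=
    fun t => (((hsmooth t).fderiv_right (m := (⊤ : ℕ∞)) (by simp)).fderiv_right (m := (⊤ : ℕ∞)) (by simp)).differentiable (by simp)
  have hD2at : ∀ (t : ℝ) x, HasFDerivAt (Df t) (fderiv ℝ (fderiv ℝ (f t)) x) x := by
    intro t x; rw [hDfe t]; exact (hdiff1 t x).hasFDerivAt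
  have hD3at : ∀ (t : ℝ) x, HasFDerivAt (fderiv ℝ (fderiv ℝ (f t)))
      (fderiv ℝ (fderiv ℝ (fderiv ℝ (f t))) x) x := fun t x => (hdiff2 t x).hasFDerivAt
  -- bounds
  have hrp : ∀ s t : ℝ, (0:ℝ) ≤ |s - t| ^ δ := fun s t => Real.rpow_nonneg (abs_nonneg _) δ
  have hB2 : ∀ (t : ℝ) x, ‖x‖ ≤ 3*M → ‖fderiv ℝ (fderiv ℝ (f t)) x‖ ≤ C₂ := fun t x hx => by
    rw [norm_fd2]; exact le_trans (hC₂' t x hx) (le_max_left _ _)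
  have hB3 : ∀ (t : ℝ) x, ‖x‖ ≤ 3*M → ‖fderiv ℝ (fderiv ℝ (fderiv ℝ (f t))) x‖ ≤ C₃ :=
    fun t x hx => by
      rw [norm_fd3]; exact le_trans (hC₃' t x hx) (le_max_left _ _)
  have hH2 : ∀ (s t : ℝ) x, ‖x‖ ≤ 3*M →
      ‖fderiv ℝ (fderiv ℝ (f s)) x - fderiv ℝ (fderiv ℝ (f t)) x‖ ≤ CH * |s - t| ^ δ :=
    fun s t x hx => le_trans (norm_fd2_sub_le _ _ _) (le_trans (hCH' s t x hx)
      (mul_le_mul_of_nonneg_right (le_max_left _ _) (hrp s t)))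
  -- Lipschitz facts
  have DfLip : ∀ (t : ℝ) p q, ‖p‖ ≤ 3*M → ‖q‖ ≤ 3*M → ‖Df t q - Df t p‖ ≤ C₂ * ‖q - p‖ := by
    intro t p q hp hq
    refine mvt_seg (fun x _ => hD2at t x) (fun x hx => hB2 t x ?_)
    exact (seg_norm_le₀ hx).trans (max_le hp hq)
  have D2Lip : ∀ (t : ℝ) p q, ‖p‖ ≤ 3*M → ‖q‖ ≤ 3*M →
      ‖fderiv ℝ (fderiv ℝ (f t)) q - fderiv ℝ (fderiv ℝ (f t)) p‖ ≤ C₃ * ‖q - p‖ := by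
    intro t p q hp hq
    refine mvt_seg (fun x _ => hD3at t x) (fun x hx => hB3 t x ?_)
    exact (seg_norm_le₀ hx).trans (max_le hp hq)
  have DgLip : ∀ (s t : ℝ) p q, ‖p‖ ≤ 3*M → ‖q‖ ≤ 3*M →
      ‖(Df s q - Df t q) - (Df s p - Df t p)‖ ≤ (CH * |s - t| ^ δ) * ‖q - p‖ := by
    intro s t p q hp hq
    refine mvt_seg (g := fun y => Df s y - Df t y)
      (g' := fun x => fderiv ℝ (fderiv ℝ (f s)) x - fderiv ℝ (fderiv ℝ (f t)) x)
      (fun x _ => (hD2at s x).sub (hD2at t x)) (fun x hx => hH2 s t x ?_)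
    exact (seg_norm_le₀ hx).trans (max_le hp hq)
  refine ⟨2*C₂ + CH + C₃*M + 1, by linarith, ?_, ?_⟩
  · -- part (1)
    rintro u u' v c c' ⟨hu1, hu2⟩ ⟨ha1, ha2⟩ ⟨hu'1, hu'2⟩ ⟨hv1, hv2⟩
    have hc'0 : 0 ≤ c' := (norm_nonneg _).trans (hu'1 0)
    have hc0 : 0 ≤ c := (norm_nonneg _).trans (hv1 0)
    have hMle : M ≤ 3*M := by linarith
    have hbB : ∀ r : ℝ, ‖u r‖ ≤ 3*M := fun r => (hu1 r).trans hMle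
    have haB : ∀ r : ℝ, ‖(u+u') r‖ ≤ 3*M := fun r => (ha1 r).trans hMle
    have hu'r : ∀ r : ℝ, (u+u') r - u r = u' r := fun r => by
      simp [Pi.add_apply]
    have hu'2M : ∀ r : ℝ, ‖u' r‖ ≤ 2*M := fun r => by
      rw [← hu'r r]; exact (norm_sub_le _ _).trans (by linarith [ha1 r, hu1 r])
    have hmix : ∀ r r' : ℝ, ‖u r + u' r'‖ ≤ 3*M := fun r r' =>
      (norm_add_le _ _).trans (by linarith [hu1 r, hu'2M r'])
    have hA : ∀ r : ℝ, ‖Df r ((u+u') r) - Df r (u r)‖ ≤ C₂ * c' := fun r => by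
      refine (DfLip r (u r) ((u+u') r) (hbB r) (haB r)).trans ?_
      rw [hu'r r]
      exact mul_le_mul_of_nonneg_left (hu'1 r) hC₂0
    have hAd : ∀ s t : ℝ, ‖(Df s ((u+u') s) - Df s (u s)) - (Df t ((u+u') t) - Df t (u t))‖
        ≤ (CH + C₂ + C₃*M) * c' * |s - t| ^ δ := by
      intro s t
      have hd0 : 0 ≤ |s - t| ^ δ := hrp s t
      have hX1 : ‖(Df s ((u+u') s) - Df t ((u+u') s)) - (Df s (u s) - Df t (u s))‖
          ≤ CH * c' * |s - t| ^ δ := by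
        refine (DgLip s t (u s) ((u+u') s) (hbB s) (haB s)).trans ?_
        rw [hu'r s]
        calc (CH * |s - t| ^ δ) * ‖u' s‖ ≤ (CH * |s - t| ^ δ) * c' :=
              mul_le_mul_of_nonneg_left (hu'1 s) (mul_nonneg hCH0 hd0)
          _ = CH * c' * |s - t| ^ δ := by ring
      have hX2 : ‖Df t ((u+u') s) - Df t (u s + u' t)‖ ≤ C₂ * c' * |s - t| ^ δ := by
        refine (DfLip t (u s + u' t) ((u+u') s) (hmix s t) (haB s)).trans ?_
        have he : (u+u') s - (u s + u' t) = u' s - u' t := by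
          simp only [Pi.add_apply]; abel
        rw [he]
        calc C₂ * ‖u' s - u' t‖ ≤ C₂ * (c' * |s - t| ^ δ) :=
              mul_le_mul_of_nonneg_left (hu'2 s t) hC₂0
          _ = C₂ * c' * |s - t| ^ δ := by ring
      have hX3 : ‖(Df t (u s + u' t) - Df t (u s)) - (Df t (u t + u' t) - Df t (u t))‖
          ≤ C₃*M * c' * |s - t| ^ δ := by
        have hmv : ‖(Df t (u s + u' t) - Df t (u s)) - (Df t (u t + u' t) - Df t (u t))‖
            ≤ (C₃ * c') * ‖u s - u t‖ := by
          refine mvt_seg (g := fun y => Df t (y + u' t) - Df t y)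
            (g' := fun x => (fderiv ℝ (fderiv ℝ (f t)) (x + u' t))
              - fderiv ℝ (fderiv ℝ (f t)) x) (p := u t) (q := u s) ?_ ?_
          · intro x _
            have h1 : HasFDerivAt (fun y => Df t (y + u' t))
                (fderiv ℝ (fderiv ℝ (f t)) (x + u' t)) x := by
              have h := (hD2at t (x + u' t)).comp x ((hasFDerivAt_id x).add_const (u' t))
              rwa [ContinuousLinearMap.comp_id] at h
            exact h1.sub (hD2at t x)
          · intro x hx
            have hxM : ‖x‖ ≤ M := (seg_norm_le₀ hx).trans (max_le (hu1 t) (hu1 s))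
            have hxw : ‖x + u' t‖ ≤ 3*M :=
              (norm_add_le _ _).trans (by linarith [hu'2M t])
            refine (D2Lip t x (x + u' t) (hxM.trans hMle) hxw).trans ?_
            rw [add_sub_cancel_left]
            exact mul_le_mul_of_nonneg_left (hu'1 t) hC₃0
        refine hmv.trans ?_
        calc (C₃ * c') * ‖u s - u t‖ ≤ (C₃ * c') * (M * |s - t| ^ δ) :=
              mul_le_mul_of_nonneg_left (hu2 s t) (mul_nonneg hC₃0 hc'0)
          _ = C₃*M * c' * |s - t| ^ δ := by ring
      have hsum : (Df s ((u+u') s) - Df s (u s)) - (Df t ((u+u') t) - Df t (u t))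
          = ((Df s ((u+u') s) - Df t ((u+u') s)) - (Df s (u s) - Df t (u s)))
            + (Df t ((u+u') s) - Df t (u s + u' t))
            + ((Df t (u s + u' t) - Df t (u s)) - (Df t (u t + u' t) - Df t (u t))) := by
        simp only [Pi.add_apply]; abel
      rw [hsum]
      refine (norm_add₃_le).trans ?_
      have he : CH * c' * |s - t| ^ δ + C₂ * c' * |s - t| ^ δ + C₃*M * c' * |s - t| ^ δ
          = (CH + C₂ + C₃*M) * c' * |s - t| ^ δ := by ring
      linarith [hX1, hX2, hX3]
    constructor
    · intro r
      have h1 : Df r ((u+u') r) (v r) - Df r (u r) (v r)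
          = (Df r ((u+u') r) - Df r (u r)) (v r) := by
        simp [ContinuousLinearMap.sub_apply]
      beta_reduce
      rw [h1]
      calc ‖(Df r ((u+u') r) - Df r (u r)) (v r)‖
          ≤ ‖Df r ((u+u') r) - Df r (u r)‖ * ‖v r‖ := ContinuousLinearMap.le_opNorm _ _
        _ ≤ (C₂ * c') * c :=
            mul_le_mul (hA r) (hv1 r) (norm_nonneg _) (mul_nonneg hC₂0 hc'0)
        _ = C₂ * (c' * c) := by ring
        _ ≤ (2*C₂ + CH + C₃*M + 1) * (c' * c) :=
            mul_le_mul_of_nonneg_right (by linarith) (mul_nonneg hc'0 hc0)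
        _ = (2*C₂ + CH + C₃*M + 1) * c' * c := by ring
    · intro s t
      have hd0 : 0 ≤ |s - t| ^ δ := hrp s t
      have hsplit : (Df s ((u+u') s) (v s) - Df s (u s) (v s))
            - (Df t ((u+u') t) (v t) - Df t (u t) (v t))
          = (Df s ((u+u') s) - Df s (u s)) (v s - v t)
            + ((Df s ((u+u') s) - Df s (u s)) - (Df t ((u+u') t) - Df t (u t))) (v t) := by
        simp only [ContinuousLinearMap.sub_apply, map_sub]
        abel
      rw [hsplit]
      refine (norm_add_le _ _).trans ?_
      have t1 : ‖(Df s ((u+u') s) - Df s (u s)) (v s - v t)‖ ≤ (C₂ * c') * (c * |s - t| ^ δ) :=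
        le_trans (ContinuousLinearMap.le_opNorm _ _)
          (mul_le_mul (hA s) (hv2 s t) (norm_nonneg _) (mul_nonneg hC₂0 hc'0))
      have t2 : ‖((Df s ((u+u') s) - Df s (u s)) - (Df t ((u+u') t) - Df t (u t))) (v t)‖
          ≤ ((CH + C₂ + C₃*M) * c' * |s - t| ^ δ) * c :=
        le_trans (ContinuousLinearMap.le_opNorm _ _)
          (mul_le_mul (hAd s t) (hv1 t) (norm_nonneg _)
            (mul_nonneg (mul_nonneg (by linarith) hc'0) hd0))
      calc _ ≤ (C₂ * c') * (c * |s - t| ^ δ) + ((CH + C₂ + C₃*M) * c' * |s - t| ^ δ) * c :=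
            add_le_add t1 t2
        _ = (2*C₂ + CH + C₃*M) * (c' * (c * |s - t| ^ δ)) := by ring
        _ ≤ (2*C₂ + CH + C₃*M + 1) * (c' * (c * |s - t| ^ δ)) :=
            mul_le_mul_of_nonneg_right (by linarith)
              (mul_nonneg hc'0 (mul_nonneg hc0 hd0))
        _ = (2*C₂ + CH + C₃*M + 1) * c' * c * |s - t| ^ δ := by ring
  · -- part (2)
    rintro u u' c' ⟨hu1, hu2⟩ ⟨ha1, ha2⟩ ⟨hu'1, hu'2⟩
    have hc'0 : 0 ≤ c' := (norm_nonneg _).trans (hu'1 0)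
    have hMle : M ≤ 3*M := by linarith
    have hbB : ∀ r : ℝ, ‖u r‖ ≤ 3*M := fun r => (hu1 r).trans hMle
    have haB : ∀ r : ℝ, ‖(u+u') r‖ ≤ 3*M := fun r => (ha1 r).trans hMle
    have hu'r : ∀ r : ℝ, (u+u') r - u r = u' r := fun r => by
      simp [Pi.add_apply]
    have hu'2M : ∀ r : ℝ, ‖u' r‖ ≤ 2*M := fun r => by
      rw [← hu'r r]; exact (norm_sub_le _ _).trans (by linarith [ha1 r, hu1 r])
    -- pointwise bound via Taylor remainder between `u r` and `(u+u') r`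
    have hpt : ∀ r : ℝ, ‖f r ((u+u') r) - f r (u r) - Df r (u r) (u' r)‖ ≤ (C₂ * c') * c' := by
      intro r
      have hmv : ‖(f r ((u+u') r) - Df r (u r) ((u+u') r)) - (f r (u r) - Df r (u r) (u r))‖
          ≤ (C₂ * c') * ‖(u+u') r - u r‖ := by
        refine mvt_seg (g := fun y => f r y - Df r (u r) y)
          (g' := fun x => Df r x - Df r (u r)) ?_ ?_
        · intro x _
          exact (hDf r x).sub ((Df r (u r)).hasFDerivAt)
        · intro x hx
          have hxM : ‖x‖ ≤ M := (seg_norm_le₀ hx).trans (max_le (hu1 r) (ha1 r))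
          refine (DfLip r (u r) x (hbB r) (hxM.trans hMle)).trans ?_
          have hxc : ‖x - u r‖ ≤ c' := by
            have h := seg_norm_le' (z := u r) hx
            rw [sub_self, norm_zero, max_eq_right (norm_nonneg _), hu'r r] at h
            exact h.trans (hu'1 r)
          exact mul_le_mul_of_nonneg_left hxc hC₂0
      have he : f r ((u+u') r) - f r (u r) - Df r (u r) (u' r)
          = (f r ((u+u') r) - Df r (u r) ((u+u') r)) - (f r (u r) - Df r (u r) (u r)) := by
        rw [show Df r (u r) (u' r) = Df r (u r) ((u+u') r) - Df r (u r) (u r) by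
          rw [← map_sub]; congr 1; rw [hu'r r]]
        abel
      rw [he]
      refine hmv.trans ?_
      rw [hu'r r]
      exact mul_le_mul_of_nonneg_left (hu'1 r) (mul_nonneg hC₂0 hc'0)
    constructor
    · intro r
      refine (hpt r).trans ?_
      calc (C₂ * c') * c' = C₂ * (c' * c') := by ring
        _ ≤ (2*C₂ + CH + C₃*M + 1) * (c' * c') :=
            mul_le_mul_of_nonneg_right (by linarith) (mul_nonneg hc'0 hc'0)
        _ = (2*C₂ + CH + C₃*M + 1) * c' ^ 2 := by ring
    · intro s t
      have hd0 : 0 ≤ |s - t| ^ δ := hrp s t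
      -- T₁ : Hölder-in-time part
      have hT1 : ‖(f s ((u+u') s) - f t ((u+u') s)
              - (Df s (u s) ((u+u') s) - Df t (u s) ((u+u') s)))
            - (f s (u s) - f t (u s) - (Df s (u s) (u s) - Df t (u s) (u s)))‖
          ≤ ((CH * |s - t| ^ δ) * c') * ‖(u+u') s - u s‖ := by
        refine mvt_seg (g := fun y => f s y - f t y - (Df s (u s) y - Df t (u s) y))
          (g' := fun x => Df s x - Df t x - (Df s (u s) - Df t (u s))) ?_ ?_
        · intro x _
          exact ((hDf s x).sub (hDf t x)).sub
            (((Df s (u s)).hasFDerivAt).sub ((Df t (u s)).hasFDerivAt))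
        · intro x hx
          have hxM : ‖x‖ ≤ M := (seg_norm_le₀ hx).trans (max_le (hu1 s) (ha1 s))
          refine (DgLip s t (u s) x (hbB s) (hxM.trans hMle)).trans ?_
          have hxc : ‖x - u s‖ ≤ c' := by
            have h := seg_norm_le' (z := u s) hx
            rw [sub_self, norm_zero, max_eq_right (norm_nonneg _), hu'r s] at h
            exact h.trans (hu'1 s)
          exact mul_le_mul_of_nonneg_left hxc (mul_nonneg hCH0 (hrp s t))
      -- T₂ : base-point move with second-order Taylor bound
      have hT2 : ‖(f t (u s + u' s) - f t (u s) - Df t (u s) (u' s))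
            - (f t (u t + u' s) - f t (u t) - Df t (u t) (u' s))‖
          ≤ (C₃ * (c' * c')) * ‖u s - u t‖ := by
        refine mvt_seg (g := fun x => f t (x + u' s) - f t x - Df t x (u' s))
          (g' := fun x => Df t (x + u' s) - Df t x
            - (ContinuousLinearMap.apply ℝ X (u' s)).comp (fderiv ℝ (fderiv ℝ (f t)) x))
          (p := u t) (q := u s) ?_ ?_
        · intro x _
          have h1 : HasFDerivAt (fun y => f t (y + u' s)) (Df t (x + u' s)) x := by
            have h := (hDf t (x + u' s)).comp x ((hasFDerivAt_id x).add_const (u' s))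
            rwa [ContinuousLinearMap.comp_id] at h
          have h3 : HasFDerivAt (fun x => Df t x (u' s))
              ((ContinuousLinearMap.apply ℝ X (u' s)).comp (fderiv ℝ (fderiv ℝ (f t)) x)) x :=
            ((ContinuousLinearMap.apply ℝ X (u' s)).hasFDerivAt).comp x (hD2at t x)
          exact (h1.sub (hDf t x)).sub h3
        · intro x hx
          have hxM : ‖x‖ ≤ M := (seg_norm_le₀ hx).trans (max_le (hu1 t) (hu1 s))
          have hxw : ‖x + u' s‖ ≤ 3*M :=
            (norm_add_le _ _).trans (by linarith [hu'2M s])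
          -- second-order Taylor estimate for `Df t`
          have htay : ‖Df t (x + u' s) - Df t x - fderiv ℝ (fderiv ℝ (f t)) x (u' s)‖
              ≤ (C₃ * c') * ‖u' s‖ := by
            have hmv2 : ‖(Df t (x + u' s) - fderiv ℝ (fderiv ℝ (f t)) x (x + u' s))
                  - (Df t x - fderiv ℝ (fderiv ℝ (f t)) x x)‖
                ≤ (C₃ * c') * ‖(x + u' s) - x‖ := by
              refine mvt_seg (g := fun y => Df t y - fderiv ℝ (fderiv ℝ (f t)) x y)
                (g' := fun y => fderiv ℝ (fderiv ℝ (f t)) y - fderiv ℝ (fderiv ℝ (f t)) x)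
                (p := x) (q := x + u' s) ?_ ?_
              · intro y _
                exact (hD2at t y).sub ((fderiv ℝ (fderiv ℝ (f t)) x).hasFDerivAt)
              · intro y hy
                have hyB : ‖y‖ ≤ 3*M := (seg_norm_le₀ hy).trans (max_le (hxM.trans hMle) hxw)
                refine (D2Lip t x y (hxM.trans hMle) hyB).trans ?_
                have hyc : ‖y - x‖ ≤ c' := by
                  have h := seg_norm_le' (z := x) hy
                  rw [sub_self, norm_zero, max_eq_right (norm_nonneg _),
                    add_sub_cancel_left] at h
                  exact h.trans (hu'1 s)
                exact mul_le_mul_of_nonneg_left hyc hC₃0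
            have he2 : Df t (x + u' s) - Df t x - fderiv ℝ (fderiv ℝ (f t)) x (u' s)
                = (Df t (x + u' s) - fderiv ℝ (fderiv ℝ (f t)) x (x + u' s))
                  - (Df t x - fderiv ℝ (fderiv ℝ (f t)) x x) := by
              rw [map_add]; abel
            rw [he2]
            refine hmv2.trans ?_
            rw [add_sub_cancel_left]
          -- identify the candidate derivative with the Taylor-remainder operator
          have heq : Df t (x + u' s) - Df t x
                - (ContinuousLinearMap.apply ℝ X (u' s)).comp (fderiv ℝ (fderiv ℝ (f t)) x)
              = Df t (x + u' s) - Df t x - fderiv ℝ (fderiv ℝ (f t)) x (u' s) := by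
            ext h'
            simp only [ContinuousLinearMap.sub_apply, ContinuousLinearMap.comp_apply,
              ContinuousLinearMap.apply_apply]
            rw [second_derivative_symmetric (hDf t) (hD2at t x) h' (u' s)]
          beta_reduce
          rw [heq]
          refine htay.trans ?_
          calc (C₃ * c') * ‖u' s‖ ≤ (C₃ * c') * c' :=
                mul_le_mul_of_nonneg_left (hu'1 s) (mul_nonneg hC₃0 hc'0)
            _ = C₃ * (c' * c') := by ring
      -- T₃ : move the increment
      have hT3 : ‖(f t (u t + u' s) - Df t (u t) (u t + u' s))
            - (f t (u t + u' t) - Df t (u t) (u t + u' t))‖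
          ≤ (C₂ * c') * ‖(u t + u' s) - (u t + u' t)‖ := by
        refine mvt_seg (g := fun y => f t y - Df t (u t) y)
          (g' := fun x => Df t x - Df t (u t)) (p := u t + u' t) (q := u t + u' s) ?_ ?_
        · intro x _
          exact (hDf t x).sub ((Df t (u t)).hasFDerivAt)
        · intro x hx
          have hx1 : ‖u t + u' t‖ ≤ 3*M := (norm_add_le _ _).trans (by linarith [hu1 t, hu'2M t])
          have hx2 : ‖u t + u' s‖ ≤ 3*M := (norm_add_le _ _).trans (by linarith [hu1 t, hu'2M s])
          have hxB : ‖x‖ ≤ 3*M := (seg_norm_le₀ hx).trans (max_le hx1 hx2)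
          refine (DfLip t (u t) x (hbB t) hxB).trans ?_
          have hxc : ‖x - u t‖ ≤ c' := by
            have h := seg_norm_le' (z := u t) hx
            rw [add_sub_cancel_left, add_sub_cancel_left] at h
            exact h.trans (max_le (hu'1 t) (hu'1 s))
          exact mul_le_mul_of_nonneg_left hxc hC₂0
      -- assemble
      have hsum : (f s ((u+u') s) - f s (u s) - Df s (u s) (u' s))
            - (f t ((u+u') t) - f t (u t) - Df t (u t) (u' t))
          = ((f s ((u+u') s) - f t ((u+u') s)
              - (Df s (u s) ((u+u') s) - Df t (u s) ((u+u') s)))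
            - (f s (u s) - f t (u s) - (Df s (u s) (u s) - Df t (u s) (u s))))
          + ((f t (u s + u' s) - f t (u s) - Df t (u s) (u' s))
            - (f t (u t + u' s) - f t (u t) - Df t (u t) (u' s)))
          + ((f t (u t + u' s) - Df t (u t) (u t + u' s))
            - (f t (u t + u' t) - Df t (u t) (u t + u' t))) := by
        simp only [Pi.add_apply, map_add]
        abel
      rw [hsum]
      refine (norm_add₃_le).trans ?_
      have b1 : ((CH * |s - t| ^ δ) * c') * ‖(u+u') s - u s‖ ≤ CH * (c' * c') * |s - t| ^ δ := by
        rw [hu'r s]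
        calc ((CH * |s - t| ^ δ) * c') * ‖u' s‖ ≤ ((CH * |s - t| ^ δ) * c') * c' :=
              mul_le_mul_of_nonneg_left (hu'1 s) (mul_nonneg (mul_nonneg hCH0 hd0) hc'0)
          _ = CH * (c' * c') * |s - t| ^ δ := by ring
      have b2 : (C₃ * (c' * c')) * ‖u s - u t‖ ≤ C₃*M * (c' * c') * |s - t| ^ δ := by
        calc (C₃ * (c' * c')) * ‖u s - u t‖ ≤ (C₃ * (c' * c')) * (M * |s - t| ^ δ) :=
              mul_le_mul_of_nonneg_left (hu2 s t)
                (mul_nonneg hC₃0 (mul_nonneg hc'0 hc'0))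
          _ = C₃*M * (c' * c') * |s - t| ^ δ := by ring
      have b3 : (C₂ * c') * ‖(u t + u' s) - (u t + u' t)‖
          ≤ C₂ * (c' * c') * |s - t| ^ δ := by
        rw [add_sub_add_left_eq_sub]
        calc (C₂ * c') * ‖u' s - u' t‖ ≤ (C₂ * c') * (c' * |s - t| ^ δ) :=
              mul_le_mul_of_nonneg_left (hu'2 s t) (mul_nonneg hC₂0 hc'0)
          _ = C₂ * (c' * c') * |s - t| ^ δ := by ring
      have hfin : CH * (c' * c') * |s - t| ^ δ + C₃*M * (c' * c') * |s - t| ^ δ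
            + C₂ * (c' * c') * |s - t| ^ δ
          = (CH + C₃*M + C₂) * (c' * c') * |s - t| ^ δ := by ring
      have hlast : (CH + C₃*M + C₂) * (c' * c') * |s - t| ^ δ
          ≤ (2*C₂ + CH + C₃*M + 1) * c' ^ 2 * |s - t| ^ δ := by
        have h1 : (CH + C₃*M + C₂) * (c' * c') ≤ (2*C₂ + CH + C₃*M + 1) * (c' * c') :=
          mul_le_mul_of_nonneg_right (by linarith) (mul_nonneg hc'0 hc'0)
        calc (CH + C₃*M + C₂) * (c' * c') * |s - t| ^ δ
            ≤ (2*C₂ + CH + C₃*M + 1) * (c' * c') * |s - t| ^ δ :=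
              mul_le_mul_of_nonneg_right h1 hd0
          _ = (2*C₂ + CH + C₃*M + 1) * c' ^ 2 * |s - t| ^ δ := by ring
      linarith [(hT1.trans b1), (hT2.trans b2), (hT3.trans b3)]
end

section
/- Let f : ℝ × X^α → X be continuous, bounded on bounded sets, with f(t,·) ∈ C¹ and D_x f bounded on sets ℝ × B_η(0) and t ↦ D_x f(t,·) uniformly δ-Hölder on such sets. Then the Nemitskii operator f̂(u)(t) := f(t,u(t)) maps bounded δ-Hölder continuous functions ℝ → X^α to bounded δ-Hölder continuous functions ℝ → X. -/
/-- Let `f : ℝ × X^α → X` be continuous, bounded on bounded sets, with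
`f(t,·) ∈ C¹`, `D_x f` bounded on sets `ℝ × B_η(0)` and `t ↦ D_x f(t,·)` (as well as
`t ↦ f(t,·)`) uniformly `δ`-Hölder on such sets.  Then the Nemitskii operator
`f̂(u)(t) := f(t,u(t))` maps bounded `δ`-Hölder functions `ℝ → X^α` to bounded `δ`-Hölder
functions `ℝ → X`. -/
theorem stmt13 {E X : Type*}
    [NormedAddCommGroup E] [NormedSpace ℝ E]
    [NormedAddCommGroup X] [NormedSpace ℝ X]
    (δ : ℝ) (hδ0 : 0 < δ) (hδ1 : δ ≤ 1)
    (f : ℝ → E → X) (Df : ℝ → E → (E →L[ℝ] X))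
    (hcont : Continuous fun p : ℝ × E => f p.1 p.2)
    -- bounded on bounded sets
    (hfb : ∀ η : ℝ, 0 < η → ∃ C : ℝ, ∀ (t : ℝ) (x : E), ‖x‖ ≤ η → ‖f t x‖ ≤ C)
    -- `f(t,·) ∈ C¹` with derivative `D_x f(t,·)` bounded on `ℝ × B_η(0)`
    (hDf : ∀ t x, HasFDerivAt (f t) (Df t x) x)
    (hDfb : ∀ η : ℝ, 0 < η → ∃ C : ℝ, ∀ (t : ℝ) (x : E), ‖x‖ ≤ η → ‖Df t x‖ ≤ C)
    -- uniform `δ`-Hölder continuity in `t` on sets `ℝ × B_η(0)`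
    (hfHol : ∀ η : ℝ, 0 < η → ∃ C : ℝ, ∀ (s t : ℝ) (x : E), ‖x‖ ≤ η →
      ‖f s x - f t x‖ ≤ C * |s - t| ^ δ)
    (hDfHol : ∀ η : ℝ, 0 < η → ∃ C : ℝ, ∀ (s t : ℝ) (x : E), ‖x‖ ≤ η →
      ‖Df s x - Df t x‖ ≤ C * |s - t| ^ δ)
    -- a bounded `δ`-Hölder function `u : ℝ → X^α`
    (u : ℝ → E) (Cu : ℝ) (hu : HolderBddBy δ u Cu) :
    ∃ C : ℝ, HolderBddBy δ (fun t => f t (u t)) C := by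
  obtain ⟨hub, huh⟩ := hu
  have hCu0 : 0 ≤ Cu := le_trans (norm_nonneg _) (hub 0)
  have hη : (0:ℝ) < Cu + 1 := by linarith
  obtain ⟨Cf, hCf⟩ := hfb (Cu + 1) hη
  obtain ⟨CD, hCD⟩ := hDfb (Cu + 1) hη
  obtain ⟨CH, hCH⟩ := hfHol (Cu + 1) hη
  have hmem : ∀ t, ‖u t‖ ≤ Cu + 1 := fun t => le_trans (hub t) (by linarith)
  have hCD0 : 0 ≤ CD := le_trans (norm_nonneg _) (hCD 0 0 (by simpa using hη.le))
  refine ⟨max Cf (CD * Cu + CH), ?_, ?_⟩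
  · intro t
    exact le_trans (hCf t (u t) (hmem t)) (le_max_left _ _)
  · intro s t
    have hball : Convex ℝ (Metric.closedBall (0:E) (Cu + 1)) := convex_closedBall _ _
    have hmvt : ‖f s (u s) - f s (u t)‖ ≤ CD * ‖u s - u t‖ := by
      apply hball.norm_image_sub_le_of_norm_hasFDerivWithin_le
        (f' := Df s)
        (fun x _ => (hDf s x).hasFDerivWithinAt)
        (fun x hx => hCD s x (by simpa using hx))
        (by simpa using hmem t) (by simpa using hmem s)
    have h1 : ‖f s (u s) - f s (u t)‖ ≤ CD * (Cu * |s - t| ^ δ) :=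
      hmvt.trans (by exact mul_le_mul_of_nonneg_left (huh s t) hCD0)
    have h2 : ‖f s (u t) - f t (u t)‖ ≤ CH * |s - t| ^ δ := hCH s t (u t) (hmem t)
    have hpow : 0 ≤ |s - t| ^ δ := Real.rpow_nonneg (abs_nonneg _) δ
    calc ‖f s (u s) - f t (u t)‖
        ≤ ‖f s (u s) - f s (u t)‖ + ‖f s (u t) - f t (u t)‖ := norm_sub_le_norm_sub_add_norm_sub _ _ _
      _ ≤ CD * (Cu * |s - t| ^ δ) + CH * |s - t| ^ δ := add_le_add h1 h2
      _ = (CD * Cu + CH) * |s - t| ^ δ := by ring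
      _ ≤ max Cf (CD * Cu + CH) * |s - t| ^ δ :=
          mul_le_mul_of_nonneg_right (le_max_right _ _) hpow
end

section
/- Let T(t,s) be a linear evolution operator on a normed space admitting an exponential dichotomy with projections P(t) on an interval J, and suppose u : J → X is a solution (u(t) = T(t,s)u(s) for t ≥ s in J) with J unbounded above and sup_{t∈J} ‖u(t)‖ < ∞. Then P(t)u(t) = 0 for all t ∈ J, i.e., u(t) ∈ Ran(I − P(t)), and consequently ‖u(t)‖ ≤ M e^{−γ(t−s)} ‖u(s)‖ for t ≥ s in J. -/
open Set

/-- An exponential dichotomy with constants `M, γ` on an interval `J` for a linear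
evolution operator `T(t,s)` (`t ≥ s`), as in Definition 2.2 of the paper; the backward
estimate `‖T(t,s)P(s)‖ ≤ M e^{γ(t-s)}` for `t < s` is written as the equivalent lower
bound `growth` (plus the uniform bound `bound_proj` on the projections, its value at
`t = s`). -/
structure ExpDichotomy {E : Type*} [NormedAddCommGroup E] [NormedSpace ℝ E]
    (T : ℝ → ℝ → E →L[ℝ] E) (J : Set ℝ) (P : ℝ → E →L[ℝ] E) (M γ : ℝ) : Prop where
  hM : 0 < M
  hγ : 0 < γ
  proj : ∀ t ∈ J, ∀ x, P t (P t x) = P t x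
  comm : ∀ s ∈ J, ∀ t ∈ J, s ≤ t → ∀ x, T t s (P s x) = P t (T t s x)
  iso : ∀ s ∈ J, ∀ t ∈ J, s ≤ t → Set.BijOn (T t s) (Set.range (P s)) (Set.range (P t))
  bound_proj : ∀ t ∈ J, ∀ x, ‖P t x‖ ≤ M * ‖x‖
  decay : ∀ s ∈ J, ∀ t ∈ J, s ≤ t → ∀ x,
    ‖T t s (x - P s x)‖ ≤ M * Real.exp (-γ * (t - s)) * ‖x‖
  growth : ∀ s ∈ J, ∀ t ∈ J, s ≤ t → ∀ x,
    ‖P s x‖ ≤ M * Real.exp (-γ * (t - s)) * ‖T t s (P s x)‖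

open Filter Topology

/- The unstable component `P(t)u(t)` of a solution grows at rate `e^{γ(r-t)}` forward in time,
while `‖P(r)u(r)‖ ≤ M‖u(r)‖` stays bounded; letting `r → ∞` along `J` forces `P(t)u(t) = 0`.
The solution then lies in the stable subspace, where the dichotomy gives exponential decay. -/

namespace ExpDichotomy

variable {E : Type*} [NormedAddCommGroup E] [NormedSpace ℝ E]
  {T : ℝ → ℝ → E →L[ℝ] E} {J : Set ℝ} {P : ℝ → E →L[ℝ] E} {M γ : ℝ}

theorem norm_proj_le_norm_proj_apply (hd : ExpDichotomy T J P M γ) {s r : ℝ} (hs : s ∈ J)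
    (hr : r ∈ J) (hsr : s ≤ r) (x : E) :
    ‖P s x‖ ≤ M * Real.exp (-γ * (r - s)) * ‖P r (T r s x)‖ := by
  simpa only [hd.comm s hs r hr hsr] using hd.growth s hs r hr hsr x

theorem norm_apply_le_of_proj_eq_zero (hd : ExpDichotomy T J P M γ) {s t : ℝ} (hs : s ∈ J)
    (ht : t ∈ J) (hst : s ≤ t) {x : E} (hx : P s x = 0) :
    ‖T t s x‖ ≤ M * Real.exp (-γ * (t - s)) * ‖x‖ := by
  simpa only [hx, sub_zero] using hd.decay s hs t ht hst x

theorem proj_apply_eq_zero_of_bounded (hd : ExpDichotomy T J P M γ)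
    (hJ : ∃ᶠ r in atTop, r ∈ J) {u : ℝ → E}
    (hsol : ∀ s ∈ J, ∀ t ∈ J, s ≤ t → u t = T t s (u s))
    {C : ℝ} (hbdd : ∀ t ∈ J, ‖u t‖ ≤ C) {t : ℝ} (ht : t ∈ J) :
    P t (u t) = 0 := by
  have hdecay : Tendsto (fun r => M * Real.exp (-γ * (r - t)) * (M * C)) atTop (𝓝 0) := by
    have hexp : Tendsto (fun r => Real.exp (-γ * (r - t))) atTop (𝓝 0) := by
      simpa [Function.comp_def, neg_mul, ← sub_eq_add_neg] using
        Real.tendsto_exp_neg_atTop_nhds_zero.comp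
          ((tendsto_atTop_add_const_right atTop (-t) tendsto_id).const_mul_atTop hd.hγ)
    simpa using (hexp.const_mul M).mul_const (M * C)
  have hbound : ∃ᶠ r in atTop, ‖P t (u t)‖ ≤ M * Real.exp (-γ * (r - t)) * (M * C) := by
    refine (hJ.and_eventually (eventually_ge_atTop t)).mono fun r ⟨hr, htr⟩ => ?_
    calc ‖P t (u t)‖ ≤ M * Real.exp (-γ * (r - t)) * ‖P r (u r)‖ := by
          simpa only [← hsol t ht r hr htr] using hd.norm_proj_le_norm_proj_apply ht hr htr (u t)
      _ ≤ M * Real.exp (-γ * (r - t)) * (M * C) := by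
          gcongr
          · exact mul_nonneg hd.hM.le (Real.exp_pos _).le
          · exact (hd.bound_proj r hr _).trans (by gcongr; exacts [hd.hM.le, hbdd r hr])
  exact norm_le_zero_iff.mp (ge_of_tendsto_of_frequently hdecay hbound)

end ExpDichotomy

theorem stmt15_general {E : Type*} [NormedAddCommGroup E] [NormedSpace ℝ E]
    (T : ℝ → ℝ → E →L[ℝ] E)
    (J : Set ℝ) (hJub : ∀ a : ℝ, ∃ t ∈ J, a ≤ t)
    (P : ℝ → E →L[ℝ] E) (M γ : ℝ)
    (hdich : ExpDichotomy T J P M γ)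
    (u : ℝ → E)
    (hsol : ∀ s ∈ J, ∀ t ∈ J, s ≤ t → u t = T t s (u s))
    (C : ℝ) (hbdd : ∀ t ∈ J, ‖u t‖ ≤ C) :
    (∀ t ∈ J, P t (u t) = 0) ∧
    (∀ s ∈ J, ∀ t ∈ J, s ≤ t → ‖u t‖ ≤ M * Real.exp (-γ * (t - s)) * ‖u s‖) := by
  have hJ : ∃ᶠ r in atTop, r ∈ J :=
    frequently_atTop.2 fun a => (hJub a).imp fun _ ⟨ht, hat⟩ => ⟨hat, ht⟩
  have hstable : ∀ t ∈ J, P t (u t) = 0 := fun t ht =>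
    hdich.proj_apply_eq_zero_of_bounded hJ hsol hbdd ht
  refine ⟨hstable, fun s hs t ht hst => ?_⟩
  rw [hsol s hs t ht hst]
  exact hdich.norm_apply_le_of_proj_eq_zero hs ht hst (hstable s hs)

/-- Let `T(t,s)` be a linear evolution operator on a normed space
admitting an exponential dichotomy with projections `P(t)` on an interval `J` unbounded
above, and let `u : J → X` be a bounded solution (`u(t) = T(t,s)u(s)` for `s ≤ t` in
`J`).  Then `P(t)u(t) = 0` for all `t ∈ J`, i.e. `u(t) ∈ Ran(I − P(t))`, and
consequently `‖u t‖ ≤ M e^{−γ(t−s)} ‖u s‖` for `s ≤ t` in `J`. -/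
theorem stmt15 {E : Type*} [NormedAddCommGroup E] [NormedSpace ℝ E]
    (T : ℝ → ℝ → E →L[ℝ] E)
    (hT : ∀ r t s : ℝ, s ≤ t → t ≤ r → ∀ x, T r t (T t s x) = T r s x)
    (J : Set ℝ) (hJ : J.OrdConnected) (hJub : ∀ a : ℝ, ∃ t ∈ J, a ≤ t)
    (P : ℝ → E →L[ℝ] E) (M γ : ℝ)
    (hdich : ExpDichotomy T J P M γ)
    (u : ℝ → E)
    (hsol : ∀ s ∈ J, ∀ t ∈ J, s ≤ t → u t = T t s (u s))
    (C : ℝ) (hbdd : ∀ t ∈ J, ‖u t‖ ≤ C) :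
    (∀ t ∈ J, P t (u t) = 0) ∧
    (∀ s ∈ J, ∀ t ∈ J, s ≤ t → ‖u t‖ ≤ M * Real.exp (-γ * (t - s)) * ‖u s‖) :=
  stmt15_general T J hJub P M γ hdich u hsol C hbdd
end
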